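/- Let H be a real Hilbert space and f : H → ℝ ∪ {+∞} a function with f(0) ∈ ℝ. Then 0 ∈ prox_f(q) for all q ∈ H if and only if f is of the form f(x) = f(0) + δ_{{0}}(x), i.e. f(x) = +∞ for all x ≠ 0. -/

import Mathlib

/-! If `f x < ⊤` for some `x ≠ 0`, testing the minimality of `0` against `x` at `q = 0` shows
`f x` is finite, and then testing it at `q = t • x` gives `t ‖x‖² ≤ f x - f 0 + ‖x‖² / 2`
for every real `t`, which is absurd. -/

/-- `u ∈ prox_f(q)` on a real Hilbert space `H`: `u` is a global minimizer of
`x ↦ ½‖x − q‖² + f(x)`, where `f : H → ℝ ∪ {+∞}` is modeled as `EReal`-valued. -/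
def IsProxH {H : Type*} [NormedAddCommGroup H] [InnerProductSpace ℝ H]
    (f : H → EReal) (q u : H) : Prop :=
  ∀ x : H, ((‖u - q‖ ^ 2 / 2 : ℝ) : EReal) + f u ≤ ((‖x - q‖ ^ 2 / 2 : ℝ) : EReal) + f x

theorem eq_zero_of_forall_norm_smul_le {E : Type*} [NormedAddCommGroup E] [NormedSpace ℝ E]
    {x : E} {r s : ℝ} (h : ∀ t : ℝ, ‖t • x‖ ^ 2 / 2 + r ≤ ‖x - t • x‖ ^ 2 / 2 + s) : x = 0 := by
  by_contra hx
  have hpos : 0 < ‖x‖ ^ 2 := by positivity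
  set t := (s - r) / ‖x‖ ^ 2 + 1
  have hslope : t * ‖x‖ ^ 2 = s - r + ‖x‖ ^ 2 := by
    simp only [t, add_mul, div_mul_cancel₀ _ hpos.ne', one_mul]
  have key := h t
  rw [show x - t • x = (1 - t) • x by module, norm_smul, norm_smul, mul_pow, mul_pow,
    Real.norm_eq_abs, Real.norm_eq_abs, sq_abs, sq_abs] at key
  nlinarith

theorem ne_bot_of_isProxH_zero {H : Type*} [NormedAddCommGroup H] [InnerProductSpace ℝ H]
    {f : H → EReal} (h0 : f 0 ≠ ⊥) (hprox : IsProxH f 0 0) (x : H) : f x ≠ ⊥ := by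
  intro hx
  have := hprox x
  rw [hx, EReal.add_bot, le_bot_iff, EReal.add_eq_bot_iff] at this
  exact this.elim (EReal.coe_ne_bot _) h0

theorem isProxH_zero_of_eq_top {H : Type*} [NormedAddCommGroup H] [InnerProductSpace ℝ H]
    {f : H → EReal} (h : ∀ x : H, x ≠ 0 → f x = ⊤) (q : H) : IsProxH f q 0 := by
  intro x
  rcases eq_or_ne x 0 with rfl | hx
  · exact le_rfl
  · rw [h x hx, EReal.add_top_of_ne_bot (EReal.coe_ne_bot _)]
    exact le_top

theorem zero_mem_prox_iff_general {H : Type*} [NormedAddCommGroup H] [InnerProductSpace ℝ H]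
    (f : H → EReal) (hf0 : ∃ r : ℝ, f 0 = (r : EReal)) :
    (∀ q : H, IsProxH f q 0) ↔ (∀ x : H, x ≠ 0 → f x = ⊤) := by
  refine ⟨fun h x hx => ?_, isProxH_zero_of_eq_top⟩
  obtain ⟨r, hr⟩ := hf0
  by_contra htop
  have hbot := ne_bot_of_isProxH_zero (hr ▸ EReal.coe_ne_bot r) (h 0) x
  set s := (f x).toReal
  have hs : f x = s := (EReal.coe_toReal htop hbot).symm
  refine hx (eq_zero_of_forall_norm_smul_le (r := r) (s := s) fun t => ?_)
  have := h (t • x) x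
  rwa [hr, hs, zero_sub, norm_neg, ← EReal.coe_add, ← EReal.coe_add,
    EReal.coe_le_coe_iff] at this

/-- for `f : H → ℝ ∪ {+∞}` with `f 0` finite, `0 ∈ prox_f(q)` for all `q ∈ H`
if and only if `f` is of the form `f(x) = f(0) + δ_{{0}}(x)`, i.e. `f x = +∞` for all `x ≠ 0`. -/
theorem zero_mem_prox_iff {H : Type*} [NormedAddCommGroup H] [InnerProductSpace ℝ H]
    [CompleteSpace H] (f : H → EReal) (hf0 : ∃ r : ℝ, f 0 = (r : EReal)) :
    (∀ q : H, IsProxH f q 0) ↔ (∀ x : H, x ≠ 0 → f x = ⊤) :=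
  zero_mem_prox_iff_general f hf0
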